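/- Let G be a connected finite simple graph, let A be an edge subset of minimum cardinality among those satisfying y_G(A) = y_G, where y_G ≥ 2, let W ⊆ V(G) be a set of vertices inducing a complete subgraph of G, and let F be a connected component of G − A with V(F) ∩ W ≠ ∅. If W is not contained in V(F), then 2 ≤ |W| ≤ 3. -/

import Mathlib

open SimpleGraph

/-- The number of connected components of a graph. -/
noncomputable def numComp {V : Type*} (G : SimpleGraph V) : ℕ :=
  Nat.card G.ConnectedComponent

/-- `y_G(A) = 2 c(G - A) - |A| - 1`. -/
noncomputable def yVal {V : Type*} (G : SimpleGraph V) (A : Set (Sym2 V)) : ℤ :=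
  2 * (numComp (G.deleteEdges A) : ℤ) - (A.ncard : ℤ) - 1

/-- `y_G = max_{A ⊆ E(G)} y_G(A)`. -/
noncomputable def yMax {V : Type*} (G : SimpleGraph V) : ℤ :=
  sSup { y : ℤ | ∃ A ⊆ G.edgeSet, yVal G A = y }

/-!
Put `B = A \ E(W)`. Adding the edges of `A` inside the clique `W` back merges only the `k`
components of `G - A` that meet `W`, so `c(G - B) ≥ c(G - A) - k + 1`. On the other hand every
edge of `W` joining two of these components lies in `A`; choosing one vertex of `W` in each of
them and pairing every other vertex of `W` with a chosen vertex in a different component gives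
`|A| - |B| ≥ C(k, 2) + |W| - k`, which is at least `2k - 2` as soon as `|W| ≥ 4`. Then
`y_G(B) ≥ y_G(A) = y_G` while `|B| < |A|`, contradicting the minimality of `A`.
-/

namespace Finset

variable {α β : Type*} [DecidableEq α] {s R : Finset α} {f : α → β} {X : Finset (Sym2 α)}

theorem choose_two_add_card_sdiff_le (hRs : R ⊆ s) (hRinj : Set.InjOn f R)
    (hpartner : ∀ x, ∃ r ∈ R, f r ≠ f x) (hX : ∀ u ∈ s, ∀ v ∈ s, f u ≠ f v → s(u, v) ∈ X) :
    (#R).choose 2 + (#s - #R) ≤ #X := by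
  choose p hpR hpf using hpartner
  set Y₁ := R.offDiag.image Sym2.mk.uncurry
  set Y₂ := (s \ R).image fun x => s(x, p x)
  have hY₂ : #Y₂ = #s - #R := by
    rw [card_image_of_injOn, card_sdiff_of_subset hRs]
    intro x hx y hy hxy
    rcases Sym2.eq_iff.mp hxy with ⟨h, -⟩ | ⟨h, -⟩
    · exact h
    · exact absurd (h ▸ hpR y) (mem_sdiff.mp hx).2
  have hdisj : Disjoint Y₁ Y₂ := by
    simp only [Y₁, Y₂, disjoint_left, mem_image, mem_offDiag, Prod.exists,
      Function.uncurry_apply_pair]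
    rintro _ ⟨a, b, ⟨ha, hb, -⟩, rfl⟩ ⟨x, hx, hxab⟩
    have : x = a ∨ x = b := Sym2.mem_iff.mp (hxab ▸ Sym2.mem_mk_left x (p x) :)
    exact (mem_sdiff.mp hx).2 (this.elim (· ▸ ha) (· ▸ hb))
  have hsub : Y₁ ∪ Y₂ ⊆ X := by
    simp only [Y₁, Y₂, union_subset_iff, image_subset_iff, mem_offDiag, Prod.forall,
      Function.uncurry_apply_pair]
    exact ⟨fun a b ⟨ha, hb, hab⟩ => hX a (hRs ha) b (hRs hb) (hRinj.ne ha hb hab),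
      fun x hx => hX x (mem_sdiff.mp hx).1 _ (hRs (hpR x)) (hpf x).symm⟩
  rw [← Sym2.card_image_offDiag, ← hY₂, ← card_union_of_disjoint hdisj]
  exact card_le_card hsub

theorem two_mul_card_image_le_card_add_two [DecidableEq β] (hs : 4 ≤ #s)
    (hX : ∀ u ∈ s, ∀ v ∈ s, f u ≠ f v → s(u, v) ∈ X) :
    2 * #(s.image f) ≤ #X + 2 := by
  obtain ⟨R, hRs, hRinj, hRimg⟩ :=
    exists_subset_injOn_image_eq_of_surjOn (s : Set α) (s.image f)
      (by rw [coe_image]; exact Set.surjOn_image f s)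
  have hRcard : #(R.image f) = #R := card_image_of_injOn hRinj
  rw [← hRimg, hRcard]
  obtain hk | hk := lt_or_ge #R 2
  · omega
  have hpartner (x : α) : ∃ r ∈ R, f r ≠ f x := by
    obtain ⟨b, hb, hne⟩ := exists_mem_ne (hRcard ▸ hk) (f x)
    obtain ⟨r, hr, rfl⟩ := mem_image.mp hb
    exact ⟨r, hr, hne⟩
  have hcount := choose_two_add_card_sdiff_le (coe_subset.mp hRs) hRinj hpartner hX
  have hchoose : #R * #R = 2 * (#R).choose 2 + #R := by
    rw [Nat.choose_two_right, Nat.mul_div_cancel' (Nat.even_mul_pred_self _).two_dvd,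
      Nat.mul_sub_one, Nat.sub_add_cancel (Nat.le_mul_self _)]
  have hRs : #R ≤ #s := card_le_card (coe_subset.mp hRs)
  obtain hk3 | hk4 := le_or_gt #R 3
  · interval_cases h : #R <;> omega
  · nlinarith

end Finset

namespace SimpleGraph

variable {V : Type*} {H H' : SimpleGraph V} {S : Set V}

theorem exists_mem_reachable_of_not_reachable (hnew : ∀ u v, H'.Adj u v → ¬H.Adj u v → u ∈ S)
    {u v : V} (h' : H'.Reachable u v) (h : ¬H.Reachable u v) : ∃ w ∈ S, H.Reachable u w := by
  obtain ⟨p⟩ := h'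
  induction p with
  | nil => exact absurd .rfl h
  | @cons u b v hub _ ih =>
    by_cases hH : H.Adj u b
    · obtain ⟨w, hw, hbw⟩ := ih fun hbv => h (hH.reachable.trans hbv)
      exact ⟨w, hw, hH.reachable.trans hbw⟩
    · exact ⟨u, hnew u b hub hH, .rfl⟩

theorem card_connectedComponent_add_one_le [Finite V] (hle : H ≤ H') (hS : S.Nonempty)
    (hnew : ∀ u v, H'.Adj u v → ¬H.Adj u v → u ∈ S) :
    Nat.card H.ConnectedComponent + 1 ≤
      Nat.card H'.ConnectedComponent + (H.connectedComponentMk '' S).ncard := by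
  obtain ⟨s₀, hs₀⟩ := hS
  set T := H.connectedComponentMk '' S
  set φ := ConnectedComponent.map (Hom.ofLE hle)
  have hmem_of_ne {c₁ c₂} (h : φ c₁ = φ c₂) (hne : c₁ ≠ c₂) : c₁ ∈ T := by
    induction c₁ using ConnectedComponent.ind with | h u => ?_
    induction c₂ using ConnectedComponent.ind with | h v => ?_
    obtain ⟨w, hw, huw⟩ := exists_mem_reachable_of_not_reachable hnew
      (ConnectedComponent.exact h) (fun huv => hne (ConnectedComponent.sound huv))
    exact ⟨w, hw, ConnectedComponent.sound huw.symm⟩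
  have hinj : Set.InjOn φ (insert (H.connectedComponentMk s₀) Tᶜ) := by
    have h_eq {c₁ c₂} (h₁ : c₁ ∈ insert (H.connectedComponentMk s₀) Tᶜ) (h : φ c₁ = φ c₂)
        (hne : c₁ ≠ c₂) : c₁ = H.connectedComponentMk s₀ :=
      h₁.resolve_right (not_not.mpr (hmem_of_ne h hne))
    intro c₁ h₁ c₂ h₂ h
    by_contra hne
    exact hne ((h_eq h₁ h hne).trans (h_eq h₂ h.symm (Ne.symm hne)).symm)
  have hcard := Set.ncard_le_ncard_of_injOn φ (fun _ _ => Set.mem_univ _) hinj Set.finite_univ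
  rw [Set.ncard_univ, Set.ncard_insert_of_notMem (not_not.mpr ⟨s₀, hs₀, rfl⟩)] at hcard
  have hT := Set.ncard_add_ncard_compl T
  omega

theorem mem_of_adj_of_not_reachable_deleteEdges {G : SimpleGraph V} {A : Set (Sym2 V)} {u v : V}
    (hadj : G.Adj u v) (h : ¬(G.deleteEdges A).Reachable u v) : s(u, v) ∈ A := by
  by_contra hA
  exact h ((deleteEdges_adj.mpr ⟨hadj, hA⟩).reachable)

theorem yVal_le_yVal_sdiff_sym2 [Finite V] {G : SimpleGraph V} {W : Set V} (hW : G.IsClique W)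
    (hW4 : 4 ≤ W.ncard) (A : Set (Sym2 V)) : yVal G A ≤ yVal G (A \ W.sym2) := by
  classical
  have := Fintype.ofFinite V
  have hnew (u v : V) (h' : (G.deleteEdges (A \ W.sym2)).Adj u v)
      (h : ¬(G.deleteEdges A).Adj u v) : u ∈ W := by
    simp only [deleteEdges_adj, Set.mem_sdiff, not_and, not_not] at h' h
    exact (h'.2 (h h'.1)).1
  have hcomp := card_connectedComponent_add_one_le (deleteEdges_anti Set.sdiff_subset)
    (Set.nonempty_of_ncard_ne_zero (s := W) (by omega)) hnew
  have hcross : 2 * ((G.deleteEdges A).connectedComponentMk '' W).ncard ≤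
      (A ∩ W.sym2).ncard + 2 := by
    rw [Set.ncard_eq_toFinset_card', Set.ncard_eq_toFinset_card', Set.toFinset_image]
    refine Finset.two_mul_card_image_le_card_add_two (by rwa [← Set.ncard_eq_toFinset_card']) ?_
    intro u hu v hv huv
    simp only [Set.mem_toFinset] at hu hv ⊢
    exact ⟨mem_of_adj_of_not_reachable_deleteEdges (hW hu hv (fun h => huv (h ▸ rfl)))
      (fun h => huv (ConnectedComponent.sound h)), hu, hv⟩
  have hsplit := Set.ncard_inter_add_ncard_sdiff_eq_ncard A W.sym2
  simp only [yVal, numComp]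
  omega

theorem yVal_le_yMax [Finite V] {G : SimpleGraph V} {B : Set (Sym2 V)} (hB : B ⊆ G.edgeSet) :
    yVal G B ≤ yMax G :=
  le_csSup (((Set.toFinite {A | A ⊆ G.edgeSet}).image (yVal G)).bddAbove) ⟨B, hB, rfl⟩

end SimpleGraph

theorem clique_card_between_two_and_three_general {V : Type*} [Finite V]
    (G : SimpleGraph V)
    (A : Set (Sym2 V)) (hA : A ⊆ G.edgeSet) (hy : yMax G = yVal G A)
    (hmin : ∀ B ⊆ G.edgeSet, yMax G = yVal G B → A.ncard ≤ B.ncard)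
    (W : Set V) (hW : G.IsClique W)
    (c : (G.deleteEdges A).ConnectedComponent)
    (hmeet : (c.supp ∩ W).Nonempty)
    (hns : ¬ W ⊆ c.supp) :
    2 ≤ W.ncard ∧ W.ncard ≤ 3 := by
  obtain ⟨w₀, hw₀c, hw₀W⟩ := hmeet
  obtain ⟨w₁, hw₁W, hw₁c⟩ := Set.not_subset.mp hns
  have hw₀₁ : w₀ ≠ w₁ := by rintro rfl; exact hw₁c hw₀c
  refine ⟨(Set.one_lt_ncard W.toFinite).mpr ⟨w₀, hw₀W, w₁, hw₁W, hw₀₁⟩, ?_⟩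
  by_contra! hW4
  set B := A \ W.sym2
  have hBE : B ⊆ G.edgeSet := Set.sdiff_subset.trans hA
  have hyB : yMax G = yVal G B :=
    le_antisymm (hy ▸ yVal_le_yVal_sdiff_sym2 hW hW4 A) (yVal_le_yMax hBE)
  have hw₀₁A : s(w₀, w₁) ∈ A := by
    refine mem_of_adj_of_not_reachable_deleteEdges (hW hw₀W hw₁W hw₀₁) fun h => hw₁c ?_
    rw [ConnectedComponent.mem_supp_iff] at hw₀c ⊢
    rw [← hw₀c, ConnectedComponent.sound h.symm]
  have hBA : B.ncard < A.ncard :=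
    Set.ncard_lt_ncard (Set.sdiff_ssubset_left_iff.mpr ⟨_, hw₀₁A, hw₀W, hw₁W⟩)
  exact (hmin B hBE hyB).not_gt hBA

/-- If `A` is a smallest edge subset with `y_G(A) = y_G ≥ 2`, `W` induces a complete
subgraph of `G`, and `F` is a component of `G - A` with `V(F) ∩ W ≠ ∅` and `W ⊄ V(F)`,
then `2 ≤ |W| ≤ 3`. -/
theorem clique_card_between_two_and_three {V : Type*} [Finite V]
    (G : SimpleGraph V) (hG : G.Connected)
    (A : Set (Sym2 V)) (hA : A ⊆ G.edgeSet) (hy : yMax G = yVal G A)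
    (hmin : ∀ B ⊆ G.edgeSet, yMax G = yVal G B → A.ncard ≤ B.ncard)
    (h2 : 2 ≤ yMax G)
    (W : Set V) (hW : G.IsClique W)
    (c : (G.deleteEdges A).ConnectedComponent)
    (hmeet : (c.supp ∩ W).Nonempty)
    (hns : ¬ W ⊆ c.supp) :
    2 ≤ W.ncard ∧ W.ncard ≤ 3 :=
  clique_card_between_two_and_three_general G A hA hy hmin W hW c hmeet hns
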